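/- arXiv:2211.03530 — 3 statements merged into one kernel-verified Lean document; each statement's English description precedes it below -/
import Mathlib

section
/- Let G be a tree on n vertices and k a positive integer threshold. Call a vertex v 'light against' a neighbor u if |G_{v↛u}| ≤ k, and 'light' if it is light against at least one neighbor. If every vertex of G is light, then G has at most 2k vertices. -/
/-!
Orient every vertex towards a neighbour it is light against. This gives `n` arcs on the `n - 1`
edges of the tree, so some edge `vu` is chosen from both ends. Removing that edge splits the
tree into `G_{v↛u}` and `G_{u↛v}`, each of size at most `k`.
-/

open Finset

namespace SimpleGraph

variable {V : Type*} {G : SimpleGraph V}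

/-- The paper's `G_{v↛u}`. -/
noncomputable def notThrough [Fintype V] [DecidableEq V] (G : SimpleGraph V) (v u : V) :
    Finset V :=
  univ \ univ.filter (fun w => G.dist v u + G.dist u w = G.dist v w)

theorem IsTree.notThrough_swap [Fintype V] [DecidableEq V] (hG : G.IsTree) {v u : V}
    (h : G.Adj v u) : G.notThrough u v = (G.notThrough v u)ᶜ := by
  ext w
  have hvu : G.dist v u = 1 := dist_eq_one_iff_adj.mpr h
  have huv : G.dist u v = 1 := dist_eq_one_iff_adj.mpr h.symm
  have hstep := hG.dist_eq_dist_add_one_of_adj w h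
  rw [dist_comm (u := w), dist_comm (u := w)] at hstep
  simp only [notThrough, mem_compl, mem_sdiff, mem_filter, mem_univ, true_and, hvu, huv]
  omega

theorem IsTree.card_notThrough_add_card_notThrough [Fintype V] [DecidableEq V] (hG : G.IsTree)
    {v u : V} (h : G.Adj v u) :
    #(G.notThrough v u) + #(G.notThrough u v) = Fintype.card V := by
  rw [hG.notThrough_swap h, card_add_card_compl]

theorem IsTree.exists_apply_apply_eq [Fintype V] (hG : G.IsTree) (f : V → V)
    (hf : ∀ v, G.Adj v (f v)) : ∃ v, f (f v) = v := by
  classical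
  have hcard : #G.edgeFinset < #(univ : Finset V) := by
    rw [card_univ, ← hG.card_edgeFinset]
    exact Nat.lt_succ_self _
  have hmaps : Set.MapsTo (fun v => s(v, f v)) (univ : Finset V) G.edgeFinset :=
    fun v _ => mem_edgeFinset.mpr (hf v)
  obtain ⟨v, -, w, -, hne, heq⟩ := exists_ne_map_eq_of_card_lt_of_maps_to hcard hmaps
  rcases Sym2.eq_iff.mp heq with ⟨hvw, -⟩ | ⟨hv, hfv⟩
  · exact absurd hvw hne
  · exact ⟨v, by rw [hfv, hv]⟩

end SimpleGraph

theorem stmt_4_general {V : Type*} [Fintype V] [DecidableEq V]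
    (G : SimpleGraph V) (hG : G.IsTree) (k : ℕ)
    (hlight : ∀ v : V, ∃ u : V, G.Adj v u ∧
      (Finset.univ \ Finset.univ.filter
        (fun w => G.dist v u + G.dist u w = G.dist v w)).card ≤ k) :
    Fintype.card V ≤ 2 * k := by
  choose f hadj hlight using hlight
  obtain ⟨v, hv⟩ := hG.exists_apply_apply_eq f hadj
  have hv_light : #(G.notThrough v (f v)) ≤ k := hlight v
  have hfv_light : #(G.notThrough (f v) v) ≤ k := by
    have h := hlight (f v)
    rw [hv] at h
    exact h
  have := hG.card_notThrough_add_card_notThrough (hadj v)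
  omega

/-- Let `G` be a tree on `n` vertices and `k ≥ 1` a threshold. A vertex `v` is light
against a neighbor `u` if `|G_{v↛u}| ≤ k`, where `G_{v↛u}` is the set of vertices `w`
such that `u` does not lie on the unique path from `v` to `w`. If every vertex is light
(light against at least one neighbor), then `n ≤ 2k`. -/
theorem stmt_4 {V : Type*} [Fintype V] [DecidableEq V]
    (G : SimpleGraph V) (hG : G.IsTree) (k : ℕ) (hk : 1 ≤ k)
    (hlight : ∀ v : V, ∃ u : V, G.Adj v u ∧
      (Finset.univ \ Finset.univ.filter
        (fun w => G.dist v u + G.dist u w = G.dist v w)).card ≤ k) :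
    Fintype.card V ≤ 2 * k :=
  stmt_4_general G hG k hlight
end

section
/- Let G be a tree containing at least one heavy vertex (a vertex not light against any neighbor, where light against u means |G_{v↛u}| ≤ k). If v is light against u, then every vertex in G_{v↛u} is light; moreover every x ∈ G_{v↛u} with x ≠ v is light against its neighbor on the path from x to v. -/
/-- `Gnot G v u` is the set `G_{v↛u}` of vertices `w` such that `u` does not lie on the
unique path from `v` to `w` (expressed via distances). -/
noncomputable def Gnot {V : Type*} [Fintype V] [DecidableEq V]
    (G : SimpleGraph V) (v u : V) : Finset V :=
  Finset.univ \ Finset.univ.filter (fun w => G.dist v u + G.dist u w = G.dist v w)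

/-- A vertex is light (w.r.t. threshold `k`) if it is light against some neighbor. -/
def Light {V : Type*} [Fintype V] [DecidableEq V]
    (G : SimpleGraph V) (k : ℕ) (v : V) : Prop :=
  ∃ u : V, G.Adj v u ∧ (Gnot G v u).card ≤ k

/-!
In a tree, `u` lies on the path from `v` to `w` exactly when `d(v,u) + d(u,w) = d(v,w)`, and a
vertex on the path from `a` to `b` lies on the path from `a` to `m` or on the path from `m` to `b`.
Hence if `x ∈ G_{v↛u}` and `y` is the neighbor of `x` towards `v`, then `G_{x↛y} ⊆ G_{v↛u}`:
a vertex `w` with `u` on its path from `v` has `u` on its path from `x`, and since `y` is nearer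
to `u` than `x` is, that path passes through `y`. So `|G_{x↛y}| ≤ |G_{v↛u}| ≤ k`.
-/

namespace SimpleGraph

variable {V : Type*} {G : SimpleGraph V}

lemma Connected.exists_adj_dist_add_one_eq (hG : G.Connected) {x v : V} (hxv : x ≠ v) :
    ∃ y, G.Adj x y ∧ G.dist y v + 1 = G.dist x v := by
  obtain ⟨p, hp⟩ := hG.exists_walk_length_eq_dist x v
  cases p with
  | nil => exact absurd rfl hxv
  | @cons _ y _ hxy q =>
    refine ⟨y, hxy, ?_⟩
    have hq := dist_le q
    have htri : G.dist x v ≤ G.dist x y + G.dist y v := hG.dist_triangle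
    rw [dist_eq_one_iff_adj.2 hxy] at htri
    rw [Walk.length_cons] at hp
    omega

namespace IsTree

lemma length_eq_dist (hG : G.IsTree) {a b : V} {p : G.Walk a b} (hp : p.IsPath) :
    p.length = G.dist a b := by
  obtain ⟨q, hq, hlen⟩ := hG.connected.exists_path_of_dist a b
  rw [(hG.existsUnique_path a b).unique hp hq, hlen]

variable [DecidableEq V]

lemma mem_support_iff_dist_add_dist_eq (hG : G.IsTree) {a b c : V} {p : G.Walk a b}
    (hp : p.IsPath) : c ∈ p.support ↔ G.dist a c + G.dist c b = G.dist a b := by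
  constructor
  · intro hc
    have hsplit := congrArg Walk.length (p.take_spec hc)
    rw [Walk.length_append, hG.length_eq_dist (hp.takeUntil hc),
      hG.length_eq_dist (hp.dropUntil hc), hG.length_eq_dist hp] at hsplit
    exact hsplit
  · intro hc
    obtain ⟨r, -, hr⟩ := hG.connected.exists_path_of_dist a c
    obtain ⟨s, -, hs⟩ := hG.connected.exists_path_of_dist c b
    have hrs : (r.append s).IsPath :=
      (r.append s).isPath_of_length_eq_dist (by rw [Walk.length_append, hr, hs, hc])
    rw [(hG.existsUnique_path a b).unique hp hrs, Walk.mem_support_append_iff]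
    exact Or.inl r.end_mem_support

lemma dist_add_dist_eq_or (hG : G.IsTree) {a b c : V}
    (hc : G.dist a c + G.dist c b = G.dist a b) (m : V) :
    G.dist a c + G.dist c m = G.dist a m ∨ G.dist m c + G.dist c b = G.dist m b := by
  obtain ⟨p, hp, -⟩ := hG.connected.exists_path_of_dist a m
  obtain ⟨q, hq, -⟩ := hG.connected.exists_path_of_dist m b
  have hcpq : c ∈ (p.append q).support :=
    Walk.support_bypass_subset_support _ <|
      (hG.mem_support_iff_dist_add_dist_eq (Walk.bypass_isPath _)).2 hc
  rw [Walk.mem_support_append_iff] at hcpq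
  exact hcpq.imp (hG.mem_support_iff_dist_add_dist_eq hp).1
    (hG.mem_support_iff_dist_add_dist_eq hq).1

end IsTree

end SimpleGraph

open SimpleGraph

section Gnot

variable {V : Type*} [Fintype V] [DecidableEq V] {G : SimpleGraph V}

@[simp]
lemma mem_Gnot {v u w : V} : w ∈ Gnot G v u ↔ G.dist v u + G.dist u w ≠ G.dist v w := by
  simp [Gnot]

lemma Gnot_subset_Gnot (hG : G.IsTree) {v u x y : V} (hvu : G.Adj v u) (hx : x ∈ Gnot G v u)
    (hxy : G.Adj x y) (hy : G.dist y v + 1 = G.dist x v) : Gnot G x y ⊆ Gnot G v u := by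
  intro w hw
  rw [mem_Gnot] at hx hw ⊢
  intro hvuw
  rcases hG.dist_add_dist_eq_or hvuw x with hvux | hxuw
  · exact hx hvux
  apply hw
  have hvu1 := dist_eq_one_iff_adj.2 hvu
  have hxy1 := dist_eq_one_iff_adj.2 hxy
  have hxu : G.dist x u = G.dist x v + 1 := by
    have := hG.dist_eq_dist_add_one_of_adj x hvu
    rw [dist_comm (u := u) (v := x), hvu1, dist_comm (u := v)] at hx
    omega
  have hyu : G.dist y u ≤ G.dist y v + G.dist v u := hG.connected.dist_triangle
  have hyw : G.dist y w ≤ G.dist y u + G.dist u w := hG.connected.dist_triangle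
  have hxw : G.dist x w ≤ G.dist x y + G.dist y w := hG.connected.dist_triangle
  omega

end Gnot

theorem stmt_5_general {V : Type*} [Fintype V] [DecidableEq V]
    (G : SimpleGraph V) (hG : G.IsTree) (k : ℕ)
    (v u : V) (hadj : G.Adj v u) (hvu : (Gnot G v u).card ≤ k) :
    ∀ x ∈ Gnot G v u, Light G k x ∧
      (x ≠ v → ∀ y : V, G.Adj x y → G.dist y v + 1 = G.dist x v →
        (Gnot G x y).card ≤ k) := by
  intro x hx
  have towards_v : ∀ y, G.Adj x y → G.dist y v + 1 = G.dist x v → (Gnot G x y).card ≤ k :=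
    fun y hxy hy => (Finset.card_le_card (Gnot_subset_Gnot hG hadj hx hxy hy)).trans hvu
  refine ⟨?_, fun _ => towards_v⟩
  by_cases hxv : x = v
  · subst hxv
    exact ⟨u, hadj, hvu⟩
  · obtain ⟨y, hxy, hy⟩ := hG.connected.exists_adj_dist_add_one_eq hxv
    exact ⟨y, hxy, towards_v y hxy hy⟩

/-- If a tree `G` contains a heavy vertex and `v` is light against its neighbor `u`,
then every vertex `x ∈ G_{v↛u}` is light; moreover every such `x ≠ v` is light against
its neighbor on the unique path from `x` to `v`. -/
theorem stmt_5 {V : Type*} [Fintype V] [DecidableEq V]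
    (G : SimpleGraph V) (hG : G.IsTree) (k : ℕ) (hk : 1 ≤ k)
    (hheavy : ∃ h : V, ¬ Light G k h)
    (v u : V) (hadj : G.Adj v u) (hvu : (Gnot G v u).card ≤ k) :
    ∀ x ∈ Gnot G v u, Light G k x ∧
      (x ≠ v → ∀ y : V, G.Adj x y → G.dist y v + 1 = G.dist x v →
        (Gnot G x y).card ≤ k) :=
  stmt_5_general G hG k v u hadj hvu
end

section
/- Let T be a tree with diameter D, and for each vertex v and neighbor u define B_{v→u} = ∑_{w ∈ G_{v→u}} |G_{w↛r_w(v)}|, where r_w(v) is the neighbor of w on the path from w to v. Then |G_{v→u}| ≤ B_{v→u} ≤ (D+1)·|G_{v→u}|. -/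
/-!
For `w ∈ G_{v→u}` the edge `{r w, w}` separates `v` (on the side of `r w`) from every
`z ∉ G_{w→r w}` (on the side of `w`). In a tree the geodesic from `v` to `z` must cross that edge,
so `d v w + d w z = d v z`. Hence `z ∈ G_{v→u}`, and for a fixed `z` the vertices `w` counted lie
on the geodesic from `v` to `z`, where they are determined by their distance to `v`: there are at
most `D + 1` of them. Double counting gives the upper bound; the lower bound holds because
`w ∉ G_{w→r w}`.
-/

open Finset

theorem Finset.sum_card_le_card_mul {α β : Type*} [DecidableEq β] {s : Finset α}
    {t : Finset β} {B : α → Finset β} {n : ℕ} (hB : ∀ a ∈ s, B a ⊆ t)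
    (hn : ∀ b ∈ t, #{a ∈ s | b ∈ B a} ≤ n) :
    ∑ a ∈ s, #(B a) ≤ #t * n :=
  calc ∑ a ∈ s, #(B a) = ∑ a ∈ s, #{b ∈ t | b ∈ B a} :=
        sum_congr rfl fun a ha => by rw [filter_mem_eq_inter, inter_eq_right.2 (hB a ha)]
    _ = ∑ b ∈ t, #{a ∈ s | b ∈ B a} :=
        sum_card_bipartiteAbove_eq_sum_card_bipartiteBelow (fun a b => b ∈ B a)
    _ ≤ #t * n := by simpa using sum_le_card_nsmul t _ n hn

namespace SimpleGraph

variable {V : Type*} {G : SimpleGraph V}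

theorem Connected.dist_add_dist_eq_of_dist_add_dist_eq (hG : G.Connected) {x y w z : V}
    (hy : G.dist x y + G.dist y w = G.dist x w) (hw : G.dist x w + G.dist w z = G.dist x z) :
    G.dist x y + G.dist y z = G.dist x z := by
  have := hG.dist_triangle (u := y) (v := w) (w := z)
  have := hG.dist_triangle (u := x) (v := y) (w := z)
  omega

theorem IsTree.length_eq_dist_of_isPath (hG : G.IsTree) {x y : V} {p : G.Walk x y}
    (hp : p.IsPath) : p.length = G.dist x y := by
  obtain ⟨q, hq, hql⟩ := hG.connected.exists_path_of_dist x y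
  rw [(hG.existsUnique_path x y).unique hp hq, hql]

/-- The concatenation of geodesics from `x` to `y` and from `y` to `z` is the unique path `p`. -/
theorem IsTree.getVert_dist_eq_of_dist_add_dist_eq (hG : G.IsTree) {x y z : V}
    {p : G.Walk x z} (hp : p.IsPath) (hy : G.dist x y + G.dist y z = G.dist x z) :
    p.getVert (G.dist x y) = y := by
  obtain ⟨q₁, -, hq₁⟩ := hG.connected.exists_path_of_dist x y
  obtain ⟨q₂, -, hq₂⟩ := hG.connected.exists_path_of_dist y z
  have hlen : (q₁.append q₂).length = G.dist x z := by rw [Walk.length_append, hq₁, hq₂, hy]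
  rw [(hG.existsUnique_path x z).unique hp (Walk.isPath_of_length_eq_dist _ hlen),
    Walk.getVert_append', if_pos hq₁.ge, ← hq₁, Walk.getVert_length]

theorem IsTree.injOn_dist_of_dist_add_dist_eq (hG : G.IsTree) (x z : V) :
    Set.InjOn (G.dist x) {y | G.dist x y + G.dist y z = G.dist x z} := by
  obtain ⟨p, hp, -⟩ := hG.connected.exists_path_of_dist x z
  intro y hy y' hy' h
  rw [← hG.getVert_dist_eq_of_dist_add_dist_eq hp hy,
    ← hG.getVert_dist_eq_of_dist_add_dist_eq hp hy', h]

/-- The walk does not backtrack at the junction, and non-backtracking walks in a forest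
are paths. -/
theorem IsAcyclic.isPath_append_cons (hG : G.IsAcyclic) {u a w z : V} {p : G.Walk u a}
    {q : G.Walk w z} (hadj : G.Adj a w) (hp : p.IsPath) (hq : q.IsPath)
    (hpe : s(a, w) ∉ p.edges) (hqe : s(a, w) ∉ q.edges) :
    (p.append (.cons hadj q)).IsPath := by
  rw [hG.isPath_iff_isChain, Walk.edges_append, Walk.edges_cons]
  refine ((hG.isPath_iff_isChain p).1 hp).append
    (((hG.isPath_iff_isChain q).1 hq).cons fun e he => ?_) fun e he e' he' => ?_
  · exact fun h => hqe (h ▸ List.mem_of_mem_head? he)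
  · rw [List.head?_cons, Option.mem_some_iff] at he'
    rintro rfl
    exact hpe (he' ▸ List.mem_of_mem_getLast? he)

/-- `hv` puts `v` on the `a`-side and `hz` puts `z` on the `w`-side of the edge `{a, w}`, so a
geodesic to `a` followed by this edge and a geodesic from `w` is the path from `v` to `z`. -/
theorem IsTree.dist_add_dist_eq_of_adj (hG : G.IsTree) {v a w z : V} (hadj : G.Adj a w)
    (hv : G.dist v w = G.dist v a + 1) (hz : G.dist a z = G.dist w z + 1) :
    G.dist v w + G.dist w z = G.dist v z := by
  classical
  obtain ⟨p, hp, hpl⟩ := hG.connected.exists_path_of_dist v a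
  obtain ⟨q, hq, hql⟩ := hG.connected.exists_path_of_dist w z
  have hpe : s(a, w) ∉ p.edges := fun he => by
    have hw := p.snd_mem_support_of_mem_edges he
    have := dist_le (p.takeUntil w hw)
    have := p.length_takeUntil_le_length hw
    omega
  have hqe : s(a, w) ∉ q.edges := fun he => by
    have ha := q.fst_mem_support_of_mem_edges he
    have := dist_le (q.dropUntil a ha)
    have := q.length_dropUntil_le_length ha
    omega
  have := hG.length_eq_dist_of_isPath (hG.isAcyclic.isPath_append_cons hadj hp hq hpe hqe)
  rw [Walk.length_append, Walk.length_cons] at this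
  omega

end SimpleGraph

open SimpleGraph

theorem stmt_13_general {V : Type*} [Fintype V] [DecidableEq V]
    (G : SimpleGraph V) (hG : G.IsTree)
    (D : ℕ) (hD : ∀ x y : V, G.dist x y ≤ D)
    (v u : V) (r : V → V)
    (hr : ∀ w ∈ Finset.univ.filter (fun w => G.dist v u + G.dist u w = G.dist v w),
      G.Adj w (r w) ∧ G.dist (r w) v + 1 = G.dist w v) :
    (Finset.univ.filter (fun w => G.dist v u + G.dist u w = G.dist v w)).card
      ≤ ∑ w ∈ Finset.univ.filter (fun w => G.dist v u + G.dist u w = G.dist v w),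
          (Finset.univ \ Finset.univ.filter
            (fun z => G.dist w (r w) + G.dist (r w) z = G.dist w z)).card ∧
    ∑ w ∈ Finset.univ.filter (fun w => G.dist v u + G.dist u w = G.dist v w),
        (Finset.univ \ Finset.univ.filter
          (fun z => G.dist w (r w) + G.dist (r w) z = G.dist w z)).card
      ≤ (D + 1) *
        (Finset.univ.filter (fun w => G.dist v u + G.dist u w = G.dist v w)).card := by
  set S := univ.filter fun w => G.dist v u + G.dist u w = G.dist v w
  set B := fun w => univ \ univ.filter fun z => G.dist w (r w) + G.dist (r w) z = G.dist w z
  have mem_B : ∀ w z, z ∈ B w ↔ G.dist w (r w) + G.dist (r w) z ≠ G.dist w z := by simp [B]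
  have self_mem_B : ∀ w ∈ S, w ∈ B w := fun w hw => by
    simp [mem_B, dist_eq_one_iff_adj.2 (hr w hw).1, dist_eq_one_iff_adj.2 (hr w hw).1.symm]
  have between : ∀ w ∈ S, ∀ z ∈ B w, G.dist v w + G.dist w z = G.dist v z := fun w hw z hz => by
    obtain ⟨hadj, hrv⟩ := hr w hw
    have hwr := dist_eq_one_iff_adj.2 hadj
    have hz := (mem_B w z).1 hz
    have hside := hG.dist_eq_dist_add_one_of_adj z hadj
    rw [dist_comm (u := z), dist_comm (u := z)] at hside
    exact hG.dist_add_dist_eq_of_adj hadj.symm (by rw [dist_comm, ← hrv, dist_comm]) (by omega)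
  constructor
  · calc #S = ∑ w ∈ S, 1 := card_eq_sum_ones S
      _ ≤ ∑ w ∈ S, #(B w) := sum_le_sum fun w hw => card_pos.2 ⟨w, self_mem_B w hw⟩
  · rw [mul_comm]
    refine sum_card_le_card_mul (fun w hw z hz => ?_) fun z _ => ?_
    · have hvuw := (mem_filter.1 hw).2
      simp only [S, mem_filter, mem_univ, true_and]
      exact hG.connected.dist_add_dist_eq_of_dist_add_dist_eq hvuw (between w hw z hz)
    · calc #{w ∈ S | z ∈ B w} ≤ #(range (D + 1)) := card_le_card_of_injOn (G.dist v)
            (fun w _ => mem_range.2 (Nat.lt_succ_of_le (hD v w)))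
            ((hG.injOn_dist_of_dist_add_dist_eq v z).mono fun w hw => by
              simp only [coe_filter] at hw
              exact between w hw.1 z hw.2)
        _ = D + 1 := card_range _

/-- Let `G` be a tree with diameter at most `D` and `v, u` adjacent. Let
`G_{v→u} = {w : u lies on the unique path from v to w}` and for each `w ∈ G_{v→u}` let
`r w` be the neighbor of `w` on the unique path from `w` to `v`. With
`B_{v→u} = ∑_{w ∈ G_{v→u}} |G_{w↛r w}|`, we have
`|G_{v→u}| ≤ B_{v→u} ≤ (D+1)·|G_{v→u}|`. -/
theorem stmt_13 {V : Type*} [Fintype V] [DecidableEq V]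
    (G : SimpleGraph V) (hG : G.IsTree)
    (D : ℕ) (hD : ∀ x y : V, G.dist x y ≤ D)
    (v u : V) (hadj : G.Adj v u) (r : V → V)
    (hr : ∀ w ∈ Finset.univ.filter (fun w => G.dist v u + G.dist u w = G.dist v w),
      G.Adj w (r w) ∧ G.dist (r w) v + 1 = G.dist w v) :
    (Finset.univ.filter (fun w => G.dist v u + G.dist u w = G.dist v w)).card
      ≤ ∑ w ∈ Finset.univ.filter (fun w => G.dist v u + G.dist u w = G.dist v w),
          (Finset.univ \ Finset.univ.filter
            (fun z => G.dist w (r w) + G.dist (r w) z = G.dist w z)).card ∧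
    ∑ w ∈ Finset.univ.filter (fun w => G.dist v u + G.dist u w = G.dist v w),
        (Finset.univ \ Finset.univ.filter
          (fun z => G.dist w (r w) + G.dist (r w) z = G.dist w z)).card
      ≤ (D + 1) *
        (Finset.univ.filter (fun w => G.dist v u + G.dist u w = G.dist v w)).card :=
  stmt_13_general G hG D hD v u r hr
end
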